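/- For all reals λ > 0, c > 0, t > 0 and 0 < β < ct, Σ_{k=0}^∞ 2·((2k+1)!/(k!)²)·((c²t²−β²)^k/(2ct)^{2k+1})·e^{−λt}(λt)^{2k+2}/(2k+2)! = (e^{−λt}·λt/√(c²t²−β²))·I₁((λ/c)√(c²t²−β²)), where I₁(x) = Σ_{j=0}^∞ (x/2)^{2j+1}/(j!(j+1)!). -/
import Mathlib


noncomputable def besselI1 (x : ℝ) : ℝ :=
  ∑' j : ℕ, (x / 2) ^ (2 * j + 1) / ((Nat.factorial j : ℝ) * (Nat.factorial (j + 1) : ℝ))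

theorem stmt_18 (lam c t β : ℝ) (hlam : 0 < lam) (hc : 0 < c) (ht : 0 < t)
    (hβ : 0 < β) (hβct : β < c * t) :
    ∑' k : ℕ,
        2 * ((Nat.factorial (2 * k + 1) : ℝ) / (Nat.factorial k : ℝ) ^ 2) *
          ((c ^ 2 * t ^ 2 - β ^ 2) ^ k / (2 * c * t) ^ (2 * k + 1)) *
          (Real.exp (-(lam * t)) * (lam * t) ^ (2 * k + 2) /
            (Nat.factorial (2 * k + 2) : ℝ)) =
      Real.exp (-(lam * t)) * (lam * t) / Real.sqrt (c ^ 2 * t ^ 2 - β ^ 2) *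
        besselI1 (lam / c * Real.sqrt (c ^ 2 * t ^ 2 - β ^ 2)) := by
  have hA : 0 < c ^ 2 * t ^ 2 - β ^ 2 := by nlinarith
  set A := c ^ 2 * t ^ 2 - β ^ 2 with hAdef
  have hs : 0 < Real.sqrt A := Real.sqrt_pos.mpr hA
  have hs2 : Real.sqrt A ^ 2 = A := Real.sq_sqrt hA.le
  rw [besselI1, ← tsum_mul_left]
  apply tsum_congr
  intro k
  have key : Real.sqrt A ^ (2 * k + 1) = A ^ k * Real.sqrt A := by
    rw [pow_succ, pow_mul, hs2]
  have hfk : (Nat.factorial k : ℝ) ≠ 0 := by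
    exact_mod_cast (Nat.factorial_ne_zero k)
  have hfk1 : (Nat.factorial (k + 1) : ℝ) ≠ 0 := by
    exact_mod_cast (Nat.factorial_ne_zero (k + 1))
  have hfk2 : (Nat.factorial (2 * k + 1) : ℝ) ≠ 0 := by
    exact_mod_cast (Nat.factorial_ne_zero (2 * k + 1))
  have hf2 : (Nat.factorial (2 * k + 2) : ℝ) = (2 * k + 2) * Nat.factorial (2 * k + 1) := by
    rw [show 2 * k + 2 = (2 * k + 1) + 1 from rfl, Nat.factorial_succ]
    push_cast
    ring
  have hfk1e : (Nat.factorial (k + 1) : ℝ) = (k + 1) * Nat.factorial k := by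
    rw [Nat.factorial_succ]; push_cast; ring
  rw [hf2, hfk1e]
  simp only [mul_pow, div_pow, key]
  have h2k2 : (2 * (k : ℝ) + 2) ≠ 0 := by positivity
  have hk1 : ((k : ℝ) + 1) ≠ 0 := by positivity
  field_simp
  ring
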